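/- Let (H, ≺, ≻, Δ̃, σ) be a braided dendriform Hopf algebra. Then the augmentation H̄ = H ⊕ k with product extending ★ = ≺ + ≻ by making 1 a unit, coproduct Δ(x) = x⊗1 + 1⊗x + Δ̃(x) and Δ(1) = 1⊗1, counit ε(1)=1, ε|_H = 0, and braiding extending σ by σ(x⊗1)=1⊗x, σ(1⊗x)=x⊗1, is a braided bialgebra: Δ is a coassociative counital coproduct and Δ(ab) = (μ⊗μ)(id⊗σ⊗id)(Δ(a)⊗Δ(b)) for all a,b ∈ H̄. -/

import Mathlib

set_option maxHeartbeats 1000000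
noncomputable section
open TensorProduct LinearMap

/-- `f ⊗ id` on a triple tensor product. -/
def op12 {k M : Type} [Field k] [AddCommGroup M] [Module k M]
    (f : M ⊗[k] M →ₗ[k] M ⊗[k] M) : (M ⊗[k] M) ⊗[k] M →ₗ[k] (M ⊗[k] M) ⊗[k] M :=
  rTensor M f

/-- `id ⊗ f` on a triple tensor product. -/
def op23 {k M : Type} [Field k] [AddCommGroup M] [Module k M]
    (f : M ⊗[k] M →ₗ[k] M ⊗[k] M) : (M ⊗[k] M) ⊗[k] M →ₗ[k] (M ⊗[k] M) ⊗[k] M :=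
  (TensorProduct.assoc k M M M).symm.toLinearMap ∘ₗ lTensor M f
    ∘ₗ (TensorProduct.assoc k M M M).toLinearMap

/-- `id ⊗ f ⊗ id` on a fourfold tensor product (`f` acting on the middle two factors). -/
def midOp {k M : Type} [Field k] [AddCommGroup M] [Module k M]
    (f : M ⊗[k] M →ₗ[k] M ⊗[k] M) :
    (M ⊗[k] M) ⊗[k] (M ⊗[k] M) →ₗ[k] (M ⊗[k] M) ⊗[k] (M ⊗[k] M) :=
  (TensorProduct.assoc k M M (M ⊗[k] M)).symm.toLinearMap
    ∘ₗ lTensor M (TensorProduct.assoc k M M M).toLinearMap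
    ∘ₗ lTensor M (rTensor M f)
    ∘ₗ lTensor M (TensorProduct.assoc k M M M).symm.toLinearMap
    ∘ₗ (TensorProduct.assoc k M M (M ⊗[k] M)).toLinearMap

section Stmt17

variable {k H : Type} [Field k] [AddCommGroup H] [Module k H]

/-- the augmentation `H̄ = k ⊕ H` -/
abbrev Aug (k H : Type) [Field k] [AddCommGroup H] [Module k H] : Type := k × H

variable (k H)

def unitAug : Aug k H := (1, 0)
def inAug : H →ₗ[k] Aug k H := LinearMap.inr k k H
def prK : Aug k H →ₗ[k] k := LinearMap.fst k k H
def prH : Aug k H →ₗ[k] H := LinearMap.snd k k H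
def mulK : k ⊗[k] k →ₗ[k] k := (TensorProduct.lid k k).toLinearMap

variable {k H}

/-- product on `H̄` extending `★ = ≺ + ≻` with `1` a unit. -/
def mulAug (star : H ⊗[k] H →ₗ[k] H) : Aug k H ⊗[k] Aug k H →ₗ[k] Aug k H :=
  LinearMap.inl k k H ∘ₗ mulK k ∘ₗ TensorProduct.map (prK k H) (prK k H)
  + inAug k H ∘ₗ (TensorProduct.lid k H).toLinearMap ∘ₗ TensorProduct.map (prK k H) (prH k H)
  + inAug k H ∘ₗ (TensorProduct.rid k H).toLinearMap ∘ₗ TensorProduct.map (prH k H) (prK k H)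
  + inAug k H ∘ₗ star ∘ₗ TensorProduct.map (prH k H) (prH k H)

/-- coproduct on `H̄`: `Δ(x) = x ⊗ 1 + 1 ⊗ x + Δ̃(x)`, `Δ(1) = 1 ⊗ 1`. -/
def copAug (cop : H →ₗ[k] H ⊗[k] H) : Aug k H →ₗ[k] Aug k H ⊗[k] Aug k H :=
  LinearMap.toSpanSingleton k _ (unitAug k H ⊗ₜ[k] unitAug k H) ∘ₗ prK k H
  + (TensorProduct.mk k (Aug k H) (Aug k H)).flip (unitAug k H) ∘ₗ inAug k H ∘ₗ prH k H
  + TensorProduct.mk k (Aug k H) (Aug k H) (unitAug k H) ∘ₗ inAug k H ∘ₗ prH k H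
  + TensorProduct.map (inAug k H) (inAug k H) ∘ₗ cop ∘ₗ prH k H

/-- braiding on `H̄` extending `σ` by `σ(x⊗1) = 1⊗x`, `σ(1⊗x) = x⊗1`, `σ(1⊗1) = 1⊗1`. -/
def brAug (sg : H ⊗[k] H →ₗ[k] H ⊗[k] H) :
    Aug k H ⊗[k] Aug k H →ₗ[k] Aug k H ⊗[k] Aug k H :=
  TensorProduct.map (inAug k H) (inAug k H) ∘ₗ sg ∘ₗ TensorProduct.map (prH k H) (prH k H)
  + (TensorProduct.mk k (Aug k H) (Aug k H)).flip (unitAug k H) ∘ₗ inAug k H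
      ∘ₗ (TensorProduct.lid k H).toLinearMap ∘ₗ TensorProduct.map (prK k H) (prH k H)
  + TensorProduct.mk k (Aug k H) (Aug k H) (unitAug k H) ∘ₗ inAug k H
      ∘ₗ (TensorProduct.rid k H).toLinearMap ∘ₗ TensorProduct.map (prH k H) (prK k H)
  + LinearMap.toSpanSingleton k _ (unitAug k H ⊗ₜ[k] unitAug k H) ∘ₗ mulK k
      ∘ₗ TensorProduct.map (prK k H) (prK k H)


section Helpers
variable {k M : Type} [Field k] [AddCommGroup M] [Module k M]

lemma assoc_tmul_right' {A B : Type} [AddCommGroup A] [Module k A] [AddCommGroup B]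
    [Module k B] (w : A ⊗[k] B) (d : M) : (TensorProduct.assoc k A B M) (w ⊗ₜ[k] d)
    = TensorProduct.map LinearMap.id ((TensorProduct.mk k B M).flip d) w := by
  induction w using TensorProduct.induction_on with
  | zero => simp
  | tmul a b => simp
  | add a b ha hb => simp [add_tmul, ha, hb]

lemma assoc_symm_tmul_left' {B C : Type} [AddCommGroup B] [Module k B] [AddCommGroup C]
    [Module k C] (a : M) (w : B ⊗[k] C) : (TensorProduct.assoc k M B C).symm (a ⊗ₜ[k] w)
    = TensorProduct.map (TensorProduct.mk k M B a) LinearMap.id w := by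
  induction w using TensorProduct.induction_on with
  | zero => simp
  | tmul b c => simp
  | add x y hx hy => simp [tmul_add, hx, hy]

lemma map_map_apply' {A B C D E F : Type} [AddCommGroup A] [Module k A] [AddCommGroup B] [Module k B]
    [AddCommGroup C] [Module k C] [AddCommGroup D] [Module k D]
    [AddCommGroup E] [Module k E] [AddCommGroup F] [Module k F]
    (f : C →ₗ[k] E) (g : D →ₗ[k] F) (h : A →ₗ[k] C) (l : B →ₗ[k] D) (t : A ⊗[k] B) :
    TensorProduct.map f g (TensorProduct.map h l t) = TensorProduct.map (f ∘ₗ h) (g ∘ₗ l) t := by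
  rw [← LinearMap.comp_apply, ← TensorProduct.map_comp]

lemma midOp_tmul (f : M ⊗[k] M →ₗ[k] M ⊗[k] M) (a b c d : M) :
    midOp f ((a ⊗ₜ[k] b) ⊗ₜ[k] (c ⊗ₜ[k] d))
      = TensorProduct.map (TensorProduct.mk k M M a) ((TensorProduct.mk k M M).flip d)
          (f (b ⊗ₜ[k] c)) := by
  simp [midOp, assoc_tmul_right', assoc_symm_tmul_left', map_map_apply']

end Helpers

section AugLemmas
variable {k H : Type} [Field k] [AddCommGroup H] [Module k H]

/-- `x ↦ (0,x) ⊗ 1` -/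
def jL : H →ₗ[k] Aug k H ⊗[k] Aug k H :=
  (TensorProduct.mk k (Aug k H) (Aug k H)).flip (unitAug k H) ∘ₗ inAug k H
/-- `x ↦ 1 ⊗ (0,x)` -/
def jR : H →ₗ[k] Aug k H ⊗[k] Aug k H :=
  TensorProduct.mk k (Aug k H) (Aug k H) (unitAug k H) ∘ₗ inAug k H
/-- `inAug ⊗ inAug` -/
def jT : H ⊗[k] H →ₗ[k] Aug k H ⊗[k] Aug k H :=
  TensorProduct.map (inAug k H) (inAug k H)

lemma jL_apply (x : H) : jL x = (0, x) ⊗ₜ[k] unitAug k H := rfl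
lemma jR_apply (x : H) : jR x = unitAug k H ⊗ₜ[k] (0, x) := rfl
lemma jT_tmul (x y : H) : jT (x ⊗ₜ[k] y) = ((0 : k), x) ⊗ₜ[k] ((0 : k), y) := rfl

@[simp] lemma prK_apply (a : k) (x : H) : prK k H (a, x) = a := rfl
@[simp] lemma prH_apply (a : k) (x : H) : prH k H (a, x) = x := rfl
@[simp] lemma inAug_apply (x : H) : inAug k H x = (0, x) := rfl

lemma mulAug_tmul (st : H ⊗[k] H →ₗ[k] H) (a b : k) (x y : H) :
    mulAug st ((a, x) ⊗ₜ[k] (b, y)) = (a * b, a • y + b • x + st (x ⊗ₜ[k] y)) := by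
  simp [mulAug, mulK, inAug, prK, prH, Prod.ext_iff]

lemma copAug_apply (cop : H →ₗ[k] H ⊗[k] H) (a : k) (x : H) :
    copAug cop (a, x) = a • (unitAug k H ⊗ₜ[k] unitAug k H)
      + jL x + jR x + jT (cop x) := by
  simp [copAug, jL, jR, jT, inAug, prK, prH]

lemma brAug_tmul (sg : H ⊗[k] H →ₗ[k] H ⊗[k] H) (a b : k) (x y : H) :
    brAug sg ((a, x) ⊗ₜ[k] (b, y))
      = jT (sg (x ⊗ₜ[k] y)) + ((0, a • y) ⊗ₜ[k] unitAug k H)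
      + (unitAug k H ⊗ₜ[k] (0, b • x))
      + (a * b) • (unitAug k H ⊗ₜ[k] unitAug k H) := by
  simp [brAug, jT, mulK, inAug, prK, prH]

lemma prK_inAug_map_left (t : H ⊗[k] H) :
    LinearMap.rTensor (Aug k H) (prK k H) (jT t) = 0 := by
  induction t using TensorProduct.induction_on with
  | zero => simp
  | tmul a b => simp [jT_tmul, inAug, prK]
  | add a b ha hb => simp [ha, hb]

lemma prK_inAug_map_right (t : H ⊗[k] H) :
    LinearMap.lTensor (Aug k H) (prK k H) (jT t) = 0 := by
  induction t using TensorProduct.induction_on with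
  | zero => simp
  | tmul a b => simp [jT_tmul, inAug, prK]
  | add a b ha hb => simp [ha, hb]

-- coassociativity helpers
variable (cop : H →ₗ[k] H ⊗[k] H)

lemma coas1 (t : H ⊗[k] H) :
    LinearMap.rTensor (Aug k H) (copAug cop) (jT t)
      = TensorProduct.map jL (inAug k H) t + TensorProduct.map jR (inAug k H) t
        + TensorProduct.map jT (inAug k H) (LinearMap.rTensor H cop t) := by
  induction t using TensorProduct.induction_on with
  | zero => simp
  | tmul a b => simp [jT_tmul, copAug_apply, add_tmul]
  | add a b ha hb => simp [ha, hb]; abel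

lemma coas2 (t : H ⊗[k] H) :
    LinearMap.lTensor (Aug k H) (copAug cop) (jT t)
      = TensorProduct.map (inAug k H) jL t + TensorProduct.map (inAug k H) jR t
        + TensorProduct.map (inAug k H) jT (LinearMap.lTensor H cop t) := by
  induction t using TensorProduct.induction_on with
  | zero => simp
  | tmul a b => simp [jT_tmul, copAug_apply, tmul_add]
  | add a b ha hb => simp [ha, hb]; abel

lemma coas3 (w : H ⊗[k] (H ⊗[k] H)) :
    (TensorProduct.assoc k (Aug k H) (Aug k H) (Aug k H)).symm
        (TensorProduct.map (inAug k H) jT w)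
      = TensorProduct.map jT (inAug k H) ((TensorProduct.assoc k H H H).symm w) := by
  induction w using TensorProduct.induction_on with
  | zero => simp
  | tmul x w' =>
    induction w' using TensorProduct.induction_on with
    | zero => simp
    | tmul b c => simp [jT_tmul]
    | add u v hu hv => simp only [tmul_add, map_add, hu, hv]
  | add u v hu hv => simp [hu, hv]

lemma coas4 (t : H ⊗[k] H) :
    (TensorProduct.assoc k (Aug k H) (Aug k H) (Aug k H)).symm
        (TensorProduct.map (inAug k H) jL t)
      = jT t ⊗ₜ[k] unitAug k H := by
  induction t using TensorProduct.induction_on with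
  | zero => simp
  | tmul a b => simp [jT_tmul, jL_apply]
  | add a b ha hb => simp [ha, hb, add_tmul]

lemma coas5 (t : H ⊗[k] H) :
    (TensorProduct.assoc k (Aug k H) (Aug k H) (Aug k H)).symm
        (TensorProduct.map (inAug k H) jR t)
      = TensorProduct.map jL (inAug k H) t := by
  induction t using TensorProduct.induction_on with
  | zero => simp
  | tmul a b => simp [jL_apply, jR_apply]
  | add a b ha hb => simp [ha, hb]

lemma coas6 (t : H ⊗[k] H) :
    (TensorProduct.assoc k (Aug k H) (Aug k H) (Aug k H)).symm
        (unitAug k H ⊗ₜ[k] jT t)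
      = TensorProduct.map jR (inAug k H) t := by
  induction t using TensorProduct.induction_on with
  | zero => simp
  | tmul a b => simp [jT_tmul, jR_apply]
  | add a b ha hb => simp [tmul_add, ha, hb]

lemma copAug_unit (cop : H →ₗ[k] H ⊗[k] H) :
    copAug cop (unitAug k H) = unitAug k H ⊗ₜ[k] unitAug k H := by
  show copAug cop (1, 0) = _
  rw [copAug_apply]; simp

end AugLemmas

section PhiLemmas
variable {k H : Type} [Field k] [AddCommGroup H] [Module k H]
variable (st : H ⊗[k] H →ₗ[k] H) (sg : H ⊗[k] H →ₗ[k] H ⊗[k] H)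

local notation "Φ" w => TensorProduct.map (mulAug st) (mulAug st) (midOp (brAug sg) w)
local notation "UU" => unitAug k H ⊗ₜ[k] unitAug k H

lemma phi1 : (Φ (UU ⊗ₜ[k] UU)) = UU := by
  simp [midOp_tmul, brAug_tmul, mulAug_tmul, unitAug, jT_tmul, jL_apply, jR_apply, Prod.mk_zero_zero]

lemma phi2 (y : H) : (Φ (UU ⊗ₜ[k] jL y)) = jL y := by
  simp [midOp_tmul, brAug_tmul, mulAug_tmul, unitAug, jT_tmul, jL_apply, jR_apply, Prod.mk_zero_zero]

lemma phi3 (y : H) : (Φ (UU ⊗ₜ[k] jR y)) = jR y := by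
  simp [midOp_tmul, brAug_tmul, mulAug_tmul, unitAug, jT_tmul, jL_apply, jR_apply, Prod.mk_zero_zero]

lemma phi5 (x : H) : (Φ (jL x ⊗ₜ[k] UU)) = jL x := by
  simp [midOp_tmul, brAug_tmul, mulAug_tmul, unitAug, jT_tmul, jL_apply, jR_apply, Prod.mk_zero_zero]

lemma phi6 (x y : H) : (Φ (jL x ⊗ₜ[k] jL y)) = jL (st (x ⊗ₜ[k] y)) := by
  simp [midOp_tmul, brAug_tmul, mulAug_tmul, unitAug, jT_tmul, jL_apply, jR_apply, Prod.mk_zero_zero]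

lemma phi7 (x y : H) : (Φ (jL x ⊗ₜ[k] jR y)) = jT (x ⊗ₜ[k] y) := by
  simp [midOp_tmul, brAug_tmul, mulAug_tmul, unitAug, jT_tmul, jL_apply, jR_apply, Prod.mk_zero_zero]

lemma phi9 (x : H) : (Φ (jR x ⊗ₜ[k] UU)) = jR x := by
  simp [midOp_tmul, brAug_tmul, mulAug_tmul, unitAug, jT_tmul, jL_apply, jR_apply, Prod.mk_zero_zero]

lemma phi11 (x y : H) : (Φ (jR x ⊗ₜ[k] jR y)) = jR (st (x ⊗ₜ[k] y)) := by
  simp [midOp_tmul, brAug_tmul, mulAug_tmul, unitAug, jT_tmul, jL_apply, jR_apply, Prod.mk_zero_zero]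

end PhiLemmas

section PhiLemmas2
variable {k H : Type} [Field k] [AddCommGroup H] [Module k H]
variable (st : H ⊗[k] H →ₗ[k] H) (sg : H ⊗[k] H →ₗ[k] H ⊗[k] H)

local notation "Φ" w => TensorProduct.map (mulAug st) (mulAug st) (midOp (brAug sg) w)
local notation "UU" => unitAug k H ⊗ₜ[k] unitAug k H

lemma phi10 (x y : H) : (Φ (jR x ⊗ₜ[k] jL y)) = jT (sg (x ⊗ₜ[k] y)) := by
  simp only [jR_apply, jL_apply, midOp_tmul, brAug_tmul, zero_smul, zero_mul, mul_zero,
    Prod.mk_zero_zero, zero_tmul, tmul_zero, add_zero, zero_add, map_zero]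
  generalize sg (x ⊗ₜ[k] y) = σ
  induction σ using TensorProduct.induction_on with
  | zero => simp
  | tmul c d => simp [mulAug_tmul, unitAug, jT_tmul]
  | add u v hu hv => simp only [map_add, hu, hv]

lemma phi4 (t : H ⊗[k] H) : (Φ (UU ⊗ₜ[k] jT t)) = jT t := by
  induction t using TensorProduct.induction_on with
  | zero => simp
  | tmul c d => simp [midOp_tmul, brAug_tmul, mulAug_tmul, unitAug, jT_tmul, jL_apply, jR_apply, Prod.mk_zero_zero]
  | add u v hu hv => simp only [map_add, tmul_add, hu, hv]

lemma phi13 (t : H ⊗[k] H) : (Φ (jT t ⊗ₜ[k] UU)) = jT t := by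
  induction t using TensorProduct.induction_on with
  | zero => simp
  | tmul c d => simp [midOp_tmul, brAug_tmul, mulAug_tmul, unitAug, jT_tmul, jL_apply, jR_apply, Prod.mk_zero_zero]
  | add u v hu hv => simp only [map_add, add_tmul, hu, hv]

lemma phi8 (x : H) (t : H ⊗[k] H) : (Φ (jL x ⊗ₜ[k] jT t))
    = jT (LinearMap.rTensor H st ((TensorProduct.assoc k H H H).symm (x ⊗ₜ[k] t))) := by
  induction t using TensorProduct.induction_on with
  | zero => simp
  | tmul c d => simp [midOp_tmul, brAug_tmul, mulAug_tmul, unitAug, jT_tmul, jL_apply, jR_apply, Prod.mk_zero_zero]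
  | add u v hu hv => simp only [map_add, tmul_add, hu, hv]

lemma phi15 (t : H ⊗[k] H) (y : H) : (Φ (jT t ⊗ₜ[k] jR y))
    = jT (LinearMap.lTensor H st ((TensorProduct.assoc k H H H) (t ⊗ₜ[k] y))) := by
  induction t using TensorProduct.induction_on with
  | zero => simp
  | tmul c d => simp [midOp_tmul, brAug_tmul, mulAug_tmul, unitAug, jT_tmul, jL_apply, jR_apply, Prod.mk_zero_zero]
  | add u v hu hv => simp only [map_add, add_tmul, hu, hv]

lemma phi12 (x : H) (t : H ⊗[k] H) : (Φ (jR x ⊗ₜ[k] jT t))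
    = jT (LinearMap.lTensor H st ((TensorProduct.assoc k H H H)
        (op12 sg ((TensorProduct.assoc k H H H).symm (x ⊗ₜ[k] t))))) := by
  induction t using TensorProduct.induction_on with
  | zero => simp
  | tmul c d =>
    simp only [jR_apply, jT_tmul, midOp_tmul, brAug_tmul, zero_smul, zero_mul, mul_zero,
      Prod.mk_zero_zero, zero_tmul, tmul_zero, add_zero, zero_add, map_zero,
      TensorProduct.assoc_symm_tmul, op12, rTensor_tmul]
    rw [assoc_tmul_right']
    generalize sg (x ⊗ₜ[k] c) = σ
    induction σ using TensorProduct.induction_on with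
    | zero => simp
    | tmul e f => simp [mulAug_tmul, unitAug, jT_tmul]
    | add u v hu hv => simp only [map_add, hu, hv]
  | add u v hu hv => simp only [map_add, tmul_add, hu, hv]

lemma phi14 (t : H ⊗[k] H) (y : H) : (Φ (jT t ⊗ₜ[k] jL y))
    = jT (LinearMap.rTensor H st (op23 sg (t ⊗ₜ[k] y))) := by
  induction t using TensorProduct.induction_on with
  | zero => simp [op23]
  | tmul c d =>
    simp only [jL_apply, jT_tmul, midOp_tmul, brAug_tmul, zero_smul, zero_mul, mul_zero,
      Prod.mk_zero_zero, zero_tmul, tmul_zero, add_zero, zero_add, map_zero,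
      op23, LinearMap.comp_apply, LinearEquiv.coe_coe, TensorProduct.assoc_tmul,
      lTensor_tmul]
    rw [assoc_symm_tmul_left']
    generalize sg (d ⊗ₜ[k] y) = σ
    induction σ using TensorProduct.induction_on with
    | zero => simp
    | tmul e f => simp [mulAug_tmul, unitAug, jT_tmul]
    | add u v hu hv => simp only [map_add, hu, hv]
  | add u v hu hv => simp only [map_add, add_tmul, hu, hv]

lemma phi16 (t t' : H ⊗[k] H) : (Φ (jT t ⊗ₜ[k] jT t'))
    = jT (TensorProduct.map st st (midOp sg (t ⊗ₜ[k] t'))) := by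
  induction t using TensorProduct.induction_on with
  | zero => simp
  | tmul c d =>
    induction t' using TensorProduct.induction_on with
    | zero => simp
    | tmul e f =>
      simp only [jT_tmul, midOp_tmul, brAug_tmul, zero_smul, zero_mul, mul_zero,
        Prod.mk_zero_zero, zero_tmul, tmul_zero, add_zero, zero_add, map_zero]
      generalize sg (d ⊗ₜ[k] e) = σ
      induction σ using TensorProduct.induction_on with
      | zero => simp
      | tmul g h => simp [mulAug_tmul, unitAug, jT_tmul]
      | add u v hu hv => simp only [map_add, hu, hv]
    | add u v hu hv => simp only [map_add, tmul_add, hu, hv]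
  | add u v hu hv => simp only [map_add, add_tmul, hu, hv]

end PhiLemmas2

/-- The augmentation of a braided dendriform Hopf algebra
is a braided bialgebra. -/
theorem augmentation_of_braided_dendriform_Hopf_is_braided_bialgebra
    (p s : H ⊗[k] H →ₗ[k] H)                 -- `≺`, `≻`
    (sg : H ⊗[k] H →ₗ[k] H ⊗[k] H)           -- braiding
    (cop : H →ₗ[k] H ⊗[k] H)                 -- `Δ̃`
    -- `(H,≺,≻)` is a dendriform algebra :
    (hd1 : ∀ x y z : H, p (p (x ⊗ₜ[k] y) ⊗ₜ[k] z) = p (x ⊗ₜ[k] (p (y ⊗ₜ[k] z) + s (y ⊗ₜ[k] z))))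
    (hd2 : ∀ x y z : H, p (s (x ⊗ₜ[k] y) ⊗ₜ[k] z) = s (x ⊗ₜ[k] p (y ⊗ₜ[k] z)))
    (hd3 : ∀ x y z : H, s (x ⊗ₜ[k] s (y ⊗ₜ[k] z)) = s ((p (x ⊗ₜ[k] y) + s (x ⊗ₜ[k] y)) ⊗ₜ[k] z))
    -- `σ` is a braiding :
    (hybe : op12 sg ∘ₗ op23 sg ∘ₗ op12 sg = op23 sg ∘ₗ op12 sg ∘ₗ op23 sg)
    -- braided dendriform compatibilities :
    (hb1 : sg ∘ₗ lTensor H p ∘ₗ (TensorProduct.assoc k H H H).toLinearMap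
        = rTensor H p ∘ₗ op23 sg ∘ₗ op12 sg)
    (hb2 : sg ∘ₗ rTensor H p
        = lTensor H p ∘ₗ (TensorProduct.assoc k H H H).toLinearMap ∘ₗ op12 sg ∘ₗ op23 sg)
    (hb3 : sg ∘ₗ lTensor H s ∘ₗ (TensorProduct.assoc k H H H).toLinearMap
        = rTensor H s ∘ₗ op23 sg ∘ₗ op12 sg)
    (hb4 : sg ∘ₗ rTensor H s
        = lTensor H s ∘ₗ (TensorProduct.assoc k H H H).toLinearMap ∘ₗ op12 sg ∘ₗ op23 sg)
    -- `Δ̃` is coassociative :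
    (hcoass : rTensor H cop ∘ₗ cop
      = (TensorProduct.assoc k H H H).symm.toLinearMap ∘ₗ lTensor H cop ∘ₗ cop)
    -- dendriform Hopf compatibilities :
    (hH1 : cop ∘ₗ p
      = TensorProduct.map p (p + s) ∘ₗ midOp sg ∘ₗ TensorProduct.map cop cop
        + (lTensor H (p + s) ∘ₗ (TensorProduct.assoc k H H H).toLinearMap
            + rTensor H p ∘ₗ op23 sg) ∘ₗ rTensor H cop
        + rTensor H p ∘ₗ (TensorProduct.assoc k H H H).symm.toLinearMap ∘ₗ lTensor H cop
        + LinearMap.id)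
    (hH2 : cop ∘ₗ s
      = TensorProduct.map s (p + s) ∘ₗ midOp sg ∘ₗ TensorProduct.map cop cop
        + rTensor H s ∘ₗ op23 sg ∘ₗ rTensor H cop
        + (rTensor H s ∘ₗ (TensorProduct.assoc k H H H).symm.toLinearMap
            + lTensor H (p + s) ∘ₗ (TensorProduct.assoc k H H H).toLinearMap ∘ₗ op12 sg
              ∘ₗ (TensorProduct.assoc k H H H).symm.toLinearMap) ∘ₗ lTensor H cop
        + sg) :
    -- conclusion: `H̄` is a braided bialgebra
    let Hb := Aug k H
    let m := mulAug (p + s)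
    let D := copAug cop
    let e : Hb →ₗ[k] k := prK k H
    -- `Δ` is coassociative :
    (rTensor Hb D ∘ₗ D
      = (TensorProduct.assoc k Hb Hb Hb).symm.toLinearMap ∘ₗ lTensor Hb D ∘ₗ D)
    -- `ε` is a counit :
    ∧ (TensorProduct.lid k Hb).toLinearMap ∘ₗ rTensor Hb e ∘ₗ D = LinearMap.id
    ∧ (TensorProduct.rid k Hb).toLinearMap ∘ₗ lTensor Hb e ∘ₗ D = LinearMap.id
    ∧ e (unitAug k H) = 1
    -- braided multiplicativity of `Δ` : `Δ(ab) = (μ⊗μ)(id⊗σ̄⊗id)(Δ(a)⊗Δ(b))`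
    ∧ D ∘ₗ m = TensorProduct.map m m ∘ₗ midOp (brAug sg) ∘ₗ TensorProduct.map D D
    ∧ D (unitAug k H) = unitAug k H ⊗ₜ[k] unitAug k H := by
  intro Hb m D e
  unfold Hb m D e
  refine ⟨?_, ?_, ?_, ?_, ?_, ?_⟩
  · -- coassociativity
    apply LinearMap.ext; rintro ⟨a, x⟩
    have hx : rTensor H cop (cop x)
        = (TensorProduct.assoc k H H H).symm (lTensor H cop (cop x)) :=
      LinearMap.congr_fun hcoass x
    simp only [LinearMap.comp_apply, LinearEquiv.coe_coe, copAug_apply, map_add, map_smul,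
      rTensor_tmul, lTensor_tmul, coas1, coas2, coas3, coas4, coas5, coas6, hx,
      jL_apply, jR_apply]
    simp [copAug_unit, copAug_apply, jL_apply, jR_apply, add_tmul, tmul_add, coas6]
    abel
  · -- left counit
    apply LinearMap.ext; rintro ⟨a, x⟩
    simp [copAug_apply, prK_inAug_map_left, unitAug, jL_apply, jR_apply, Prod.ext_iff,
      TensorProduct.smul_tmul']
  · -- right counit
    apply LinearMap.ext; rintro ⟨a, x⟩
    simp [copAug_apply, prK_inAug_map_right, unitAug, jL_apply, jR_apply, Prod.ext_iff,
      TensorProduct.tmul_smul]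
  · rfl
  · -- braided multiplicativity
    apply TensorProduct.ext'; rintro ⟨a, x⟩ ⟨b, y⟩
    have e1 := LinearMap.congr_fun hH1 (x ⊗ₜ[k] y)
    have e2 := LinearMap.congr_fun hH2 (x ⊗ₜ[k] y)
    simp only [LinearMap.comp_apply, LinearMap.add_apply, LinearEquiv.coe_coe,
      rTensor_tmul, lTensor_tmul, TensorProduct.map_tmul, LinearMap.id_apply] at e1 e2
    have h5 : cop ((p + s) (x ⊗ₜ[k] y)) = cop (p (x ⊗ₜ[k] y)) + cop (s (x ⊗ₜ[k] y)) := by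
      simp
    rw [LinearMap.comp_apply, LinearMap.comp_apply, LinearMap.comp_apply,
      TensorProduct.map_tmul, mulAug_tmul, copAug_apply, copAug_apply, copAug_apply]
    simp only [map_add, map_smul, h5, e1, e2]
    simp only [tmul_add, add_tmul, TensorProduct.smul_tmul, TensorProduct.tmul_smul,
      map_add, map_smul]
    simp only [phi1, phi2, phi3, phi4, phi5, phi6, phi7, phi8, phi9, phi10, phi11,
      phi12, phi13, phi14, phi15, phi16]
    simp only [LinearMap.rTensor_add, LinearMap.lTensor_add, TensorProduct.map_add_left,
      TensorProduct.map_add_right, LinearMap.add_apply, map_add, LinearMap.add_apply,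
      smul_smul, smul_add]
    simp only [smul_smul, mul_comm]
    abel
  · -- counit on the unit
    show copAug cop (1, 0) = _
    rw [copAug_apply]; simp
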